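/- Let ≺₂ be the position-over-term extension of ≺₁, and let S be a finite set of admissible labeled polynomials equipped with a strict total order < (p < q read 'p was added to S later than q'). Suppose: (1) f_i^(e_i) ∈ S for i = 1,…,m, and every element of S ∖ {f₁^(e₁),…,f_m^(e_m)} was added later than each f_i^(e_i); and (2) every critical pair of S is F5-divisible or F5-rewritable by S. Then S is a signature-labeled Gröbner basis for I. -/

import Mathlib

open MvPolynomial

noncomputable section

/-- Power products of `K[x₁,…,xₙ]`, recorded by their exponent vectors
(so `x^α ∣ x^β` is `α ≤ β` and `x^α · x^β` is `α + β`). -/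
abbrev PP (n : ℕ) := Fin n →₀ ℕ

/-- Module terms `x^α • eᵢ` of the free module `R^m`. -/
abbrev MTerm (n m : ℕ) := PP n × Fin m

/-- Multiplication of a module term by a power product. -/
def mtmul {n m : ℕ} (γ : PP n) (t : MTerm n m) : MTerm n m := (γ + t.1, t.2)

/-- A monomial order `≺₁` on the power products of `K[x₁,…,xₙ]`. -/
structure MonOrd (n : ℕ) where
  ord : LinearOrder (PP n)
  mul_lt : ∀ γ a b : PP n, ord.lt a b → ord.lt (γ + a) (γ + b)
  one_le : ∀ a : PP n, ord.le 0 a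
  wf : WellFounded ord.lt

/-- A term order `≺₂` on the module terms of `R^m`: a well-order compatible with
multiplication by power products. -/
structure ModOrd (n m : ℕ) where
  ord : LinearOrder (MTerm n m)
  mul_lt : ∀ (γ : PP n) (a b : MTerm n m), ord.lt a b → ord.lt (mtmul γ a) (mtmul γ b)
  wf : WellFounded ord.lt

variable {K : Type*} [Field K] {n m : ℕ}

/-- Elements of the free module `R^m`. -/
abbrev ModElem (K : Type*) [Field K] (n m : ℕ) := Fin m → MvPolynomial (Fin n) K

/-- `u · F = u₁f₁ + … + u_m f_m`. -/
def dotF (u : ModElem K n m) (F : Fin m → MvPolynomial (Fin n) K) : MvPolynomial (Fin n) K :=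
  ∑ i, u i * F i

/-- Leading power product of a polynomial, valued in `WithBot` so that `lppW 0 = ⊥`
(the convention `lpp 0 = 0 ≺ t` for all terms `t`). -/
def lppW (o : MonOrd n) (f : MvPolynomial (Fin n) K) : WithBot (PP n) :=
  @Finset.max (PP n) o.ord f.support

/-- Leading power product of a (nonzero) polynomial. -/
def lpp (o : MonOrd n) (f : MvPolynomial (Fin n) K) : PP n :=
  WithBot.unbotD 0 (lppW o f)

/-- Leading coefficient of a polynomial (`lc 0 = 0`). -/
def lc (o : MonOrd n) (f : MvPolynomial (Fin n) K) : K := f.coeff (lpp o f)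

/-- The set of module terms occurring in a module element. -/
def msupport (u : ModElem K n m) : Finset (MTerm n m) :=
  Finset.univ.biUnion fun i => (u i).support.image fun α => (α, i)

/-- Leading module term (signature) of a module element, `⊥` for the zero element. -/
def lppMW (o : ModOrd n m) (u : ModElem K n m) : WithBot (MTerm n m) :=
  @Finset.max (MTerm n m) o.ord (msupport u)

/-- Coefficient of a module element at a module term. -/
def mcoeff (u : ModElem K n m) (t : MTerm n m) : K := (u t.2).coeff t.1

/-- Leading coefficient of a module element (`0` for the zero element). -/
def lcM (o : ModOrd n m) (u : ModElem K n m) : K :=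
  WithBot.recBotCoe 0 (fun t => mcoeff u t) (lppMW o u)

/-- `⪯` on `WithBot`-valued leading power products w.r.t. `≺₁`. -/
def wbleP (o : MonOrd n) (a b : WithBot (PP n)) : Prop :=
  @LE.le (WithBot (PP n)) (@WithBot.instLE (PP n) o.ord.toLE) a b
/-- `≺` on `WithBot`-valued leading power products w.r.t. `≺₁`. -/
def wbltP (o : MonOrd n) (a b : WithBot (PP n)) : Prop :=
  @LT.lt (WithBot (PP n)) (@WithBot.instLT (PP n) o.ord.toLT) a b
/-- `⪯` on `WithBot`-valued signatures w.r.t. `≺₂`. -/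
def wbleM (o : ModOrd n m) (a b : WithBot (MTerm n m)) : Prop :=
  @LE.le (WithBot (MTerm n m)) (@WithBot.instLE (MTerm n m) o.ord.toLE) a b
/-- `≺` on `WithBot`-valued signatures w.r.t. `≺₂`. -/
def wbltM (o : ModOrd n m) (a b : WithBot (MTerm n m)) : Prop :=
  @LT.lt (WithBot (MTerm n m)) (@WithBot.instLT (MTerm n m) o.ord.toLT) a b

/-- Multiplication of a module element by a power product `x^t`. -/
def smulPP (t : PP n) (u : ModElem K n m) : ModElem K n m := fun k => monomial t (1 : K) * u k

/-- Multiplication of a module element by a polynomial. -/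
def pmul (p : MvPolynomial (Fin n) K) (u : ModElem K n m) : ModElem K n m := fun k => p * u k

/-- The `j`-th standard basis vector `e_j` of `R^m`. -/
def eVec (j : Fin m) : ModElem K n m := fun k => if k = j then 1 else 0

/-- The module element `c · x^α · e_j`. -/
def termVec (α : PP n) (c : K) (j : Fin m) : ModElem K n m :=
  fun k => if k = j then monomial α c else 0

/-- `G = {g₁^[v₁], …, g_s^[v_s]}` is a full-labeled Gröbner basis for `I = ⟨F⟩`:
each `gᵢ = vᵢ · F`, and for every labeled polynomial `f^[u]` of `I` with `f ≠ 0`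
there is `i` with `lpp(gᵢ) ∣ lpp(f)` and `lpp(t·vᵢ) ⪯ lpp(u)`, `t = lpp(f)/lpp(gᵢ)`. -/
def IsFullLGB (o1 : MonOrd n) (o2 : ModOrd n m) (F : Fin m → MvPolynomial (Fin n) K)
    {s : ℕ} (g : Fin s → MvPolynomial (Fin n) K) (v : Fin s → ModElem K n m) : Prop :=
  (∀ i, g i = dotF (v i) F) ∧
  ∀ (f : MvPolynomial (Fin n) K) (u : ModElem K n m), f = dotF u F → f ≠ 0 →
    ∃ i, g i ≠ 0 ∧ lpp o1 (g i) ≤ lpp o1 f ∧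
      wbleM o2 (lppMW o2 (smulPP (lpp o1 f - lpp o1 (g i)) (v i))) (lppMW o2 u)

/-- `S = {g₁^(t₁), …, g_s^(t_s)}` is a signature-labeled Gröbner basis for `I = ⟨F⟩`. -/
def IsSigLGB (o1 : MonOrd n) (o2 : ModOrd n m) (F : Fin m → MvPolynomial (Fin n) K)
    {s : ℕ} (g : Fin s → MvPolynomial (Fin n) K) (t : Fin s → MTerm n m) : Prop :=
  ∃ v : Fin s → ModElem K n m, (∀ i, lppMW o2 (v i) = (t i : WithBot (MTerm n m))) ∧
    IsFullLGB o1 o2 F g v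

/-- `g^[v]` is a standard form of the module term `T` in `I = ⟨F⟩`. -/
def IsStdForm (o1 : MonOrd n) (o2 : ModOrd n m) (F : Fin m → MvPolynomial (Fin n) K)
    (T : MTerm n m) (g : MvPolynomial (Fin n) K) (v : ModElem K n m) : Prop :=
  g = dotF v F ∧ lppMW o2 v = (T : WithBot (MTerm n m)) ∧
  ∀ (f : MvPolynomial (Fin n) K) (u : ModElem K n m), f = dotF u F →
    lppMW o2 u = (T : WithBot (MTerm n m)) → wbleP o1 (lppW o1 g) (lppW o1 f)

/-- `≺₂` is the position-over-term extension of `≺₁`: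
`x^α eᵢ ≺₂ x^β e_j` iff `i > j`, or `i = j` and `x^α ≺₁ x^β`. -/
def IsPOT (o1 : MonOrd n) (o2 : ModOrd n m) : Prop :=
  ∀ a b : MTerm n m, o2.ord.lt a b ↔ (b.2 < a.2 ∨ (a.2 = b.2 ∧ o1.ord.lt a.1 b.1))

/-- `f^(T)` is an admissible labeled polynomial: some `u` satisfies `f = u·F`, `lpp(u) = T`. -/
def Admissible (o2 : ModOrd n m) (F : Fin m → MvPolynomial (Fin n) K)
    (f : MvPolynomial (Fin n) K) (T : MTerm n m) : Prop :=
  ∃ u : ModElem K n m, f = dotF u F ∧ lppMW o2 u = (T : WithBot (MTerm n m))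

/-- `r` is a strict total order on the set `B` (`r p q` read: `p` was added later than `q`). -/
def StrictTotalOn {X : Type*} (B : Set X) (r : X → X → Prop) : Prop :=
  (∀ p ∈ B, ¬ r p p) ∧
  (∀ p ∈ B, ∀ q ∈ B, ∀ w ∈ B, r p q → r q w → r p w) ∧
  (∀ p ∈ B, ∀ q ∈ B, p ≠ q → r p q ∨ r q p)

/-- `tf o1 f g = lcm(lpp f, lpp g) / lpp f`. -/
def tf (o1 : MonOrd n) (f g : MvPolynomial (Fin n) K) : PP n :=
  (lpp o1 f ⊔ lpp o1 g) - lpp o1 f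

/-- `f^[u]` has a standard representation w.r.t. the set `B` of labeled polynomials. -/
def HasStdRep (o1 : MonOrd n) (o2 : ModOrd n m)
    (B : Set (MvPolynomial (Fin n) K × ModElem K n m))
    (f : MvPolynomial (Fin n) K) (u : ModElem K n m) : Prop :=
  ∃ (s : ℕ) (p : Fin s → MvPolynomial (Fin n) K)
      (q : Fin s → MvPolynomial (Fin n) K × ModElem K n m),
    (∀ i, q i ∈ B) ∧ f = ∑ i, p i * (q i).1 ∧
    (∀ i, wbleP o1 (lppW o1 (p i * (q i).1)) (lppW o1 f)) ∧
    (∀ i, wbleM o2 (lppMW o2 (pmul (p i) ((q i).2))) (lppMW o2 u))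

/-- `(t_p, p, t_q, q)` is a critical pair of labeled polynomials. -/
def IsCritPairL (o1 : MonOrd n) (o2 : ModOrd n m)
    (later : (MvPolynomial (Fin n) K × ModElem K n m) →
      (MvPolynomial (Fin n) K × ModElem K n m) → Prop)
    (p q : MvPolynomial (Fin n) K × ModElem K n m) : Prop :=
  p.1 ≠ 0 ∧ q.1 ≠ 0 ∧
  (wbltM o2 (lppMW o2 (smulPP (tf o1 q.1 p.1) q.2)) (lppMW o2 (smulPP (tf o1 p.1 q.1) p.2)) ∨
   (lppMW o2 (smulPP (tf o1 p.1 q.1) p.2) = lppMW o2 (smulPP (tf o1 q.1 p.1) q.2) ∧ later q p))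

/-- Polynomial part of the S-polynomial of a critical pair of labeled polynomials. -/
def sPolyF (o1 : MonOrd n) (p q : MvPolynomial (Fin n) K × ModElem K n m) :
    MvPolynomial (Fin n) K :=
  monomial (tf o1 p.1 q.1) (1 : K) * p.1 -
    monomial (tf o1 q.1 p.1) (lc o1 p.1 / lc o1 q.1) * q.1

/-- Label part of the S-polynomial of a critical pair of labeled polynomials. -/
def sPolyU (o1 : MonOrd n) (p q : MvPolynomial (Fin n) K × ModElem K n m) : ModElem K n m :=
  fun k => monomial (tf o1 p.1 q.1) (1 : K) * p.2 k -
    monomial (tf o1 q.1 p.1) (lc o1 p.1 / lc o1 q.1) * q.2 k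

/-- `t·p` (labeled version) is F5-divisible by `B`. -/
def F5DivL (o1 : MonOrd n) (o2 : ModOrd n m)
    (B : Set (MvPolynomial (Fin n) K × ModElem K n m)) (t : PP n)
    (p : MvPolynomial (Fin n) K × ModElem K n m) : Prop :=
  ∃ (α : PP n) (i : Fin m), lppMW o2 p.2 = (((α, i) : MTerm n m) : WithBot (MTerm n m)) ∧
    ∃ q ∈ B, q.1 ≠ 0 ∧ ∃ (β : PP n) (j : Fin m),
      lppMW o2 q.2 = (((β, j) : MTerm n m) : WithBot (MTerm n m)) ∧
      lpp o1 q.1 ≤ t + α ∧ o2.ord.lt (((0 : PP n), j) : MTerm n m) (((0 : PP n), i) : MTerm n m)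

/-- `t·p` (labeled version) is F5-rewritable by `B`. -/
def F5RewL (o2 : ModOrd n m)
    (later : (MvPolynomial (Fin n) K × ModElem K n m) →
      (MvPolynomial (Fin n) K × ModElem K n m) → Prop)
    (B : Set (MvPolynomial (Fin n) K × ModElem K n m)) (t : PP n)
    (p : MvPolynomial (Fin n) K × ModElem K n m) : Prop :=
  ∃ q ∈ B, (∃ a b : MTerm n m, lppMW o2 q.2 = (a : WithBot (MTerm n m)) ∧
    lppMW o2 (smulPP t p.2) = (b : WithBot (MTerm n m)) ∧ a.2 = b.2 ∧ a.1 ≤ b.1) ∧ later q p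

/-- A set `G` of labeled polynomials is a full-labeled Gröbner basis for `I = ⟨F⟩`. -/
def IsFullLGBSet (o1 : MonOrd n) (o2 : ModOrd n m) (F : Fin m → MvPolynomial (Fin n) K)
    (G : Set (MvPolynomial (Fin n) K × ModElem K n m)) : Prop :=
  (∀ p ∈ G, p.1 = dotF p.2 F) ∧
  ∀ (f : MvPolynomial (Fin n) K) (u : ModElem K n m), f = dotF u F → f ≠ 0 →
    ∃ p ∈ G, p.1 ≠ 0 ∧ lpp o1 p.1 ≤ lpp o1 f ∧
      wbleM o2 (lppMW o2 (smulPP (lpp o1 f - lpp o1 p.1) p.2)) (lppMW o2 u)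

/-- `t·p` (signature version, `p = f^(x^α eᵢ)`) is F5-divisible by `B`. -/
def F5DivS (o1 : MonOrd n) (o2 : ModOrd n m)
    (B : Set (MvPolynomial (Fin n) K × MTerm n m)) (t : PP n)
    (p : MvPolynomial (Fin n) K × MTerm n m) : Prop :=
  ∃ q ∈ B, q.1 ≠ 0 ∧ lpp o1 q.1 ≤ t + p.2.1 ∧
    o2.ord.lt (((0 : PP n), q.2.2) : MTerm n m) (((0 : PP n), p.2.2) : MTerm n m)

/-- `t·p` (signature version) is F5-rewritable by `B`. -/
def F5RewS
    (later : (MvPolynomial (Fin n) K × MTerm n m) →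
      (MvPolynomial (Fin n) K × MTerm n m) → Prop)
    (B : Set (MvPolynomial (Fin n) K × MTerm n m)) (t : PP n)
    (p : MvPolynomial (Fin n) K × MTerm n m) : Prop :=
  ∃ q ∈ B, q.2.2 = p.2.2 ∧ q.2.1 ≤ t + p.2.1 ∧ later q p

/-- `(t_p, p, t_q, q)` is a critical pair (signature version). -/
def IsCritPairS (o1 : MonOrd n) (o2 : ModOrd n m)
    (later : (MvPolynomial (Fin n) K × MTerm n m) →
      (MvPolynomial (Fin n) K × MTerm n m) → Prop)
    (p q : MvPolynomial (Fin n) K × MTerm n m) : Prop :=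
  p.1 ≠ 0 ∧ q.1 ≠ 0 ∧
  (o2.ord.lt (mtmul (tf o1 q.1 p.1) q.2) (mtmul (tf o1 p.1 q.1) p.2) ∨
   (mtmul (tf o1 p.1 q.1) p.2 = mtmul (tf o1 q.1 p.1) q.2 ∧ later q p))

/-- A finite set `S` of pairs `(g, t)` is a signature-labeled Gröbner basis for `I = ⟨F⟩`. -/
def IsSigLGBSet (o1 : MonOrd n) (o2 : ModOrd n m) (F : Fin m → MvPolynomial (Fin n) K)
    (S : Set (MvPolynomial (Fin n) K × MTerm n m)) : Prop :=
  S.Finite ∧ ∃ V : MvPolynomial (Fin n) K × MTerm n m → ModElem K n m,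
    (∀ p ∈ S, lppMW o2 (V p) = (p.2 : WithBot (MTerm n m))) ∧
    IsFullLGBSet o1 o2 F ((fun p => (p.1, V p)) '' S)

end
noncomputable section Infra
open MvPolynomial

section Generic
variable {α : Type*} [LinearOrder α]

theorem gmax_eq_coe_of {s : Finset α} {M : α} (h1 : M ∈ s) (h2 : ∀ a ∈ s, a ≤ M) :
    s.max = (M : WithBot α) :=
  le_antisymm (Finset.max_le_iff.2 fun a ha => WithBot.coe_le_coe.2 (h2 a ha))
    (Finset.le_max h1)

theorem gmax_lt_coe_of {s : Finset α} {T : α} (h : ∀ a ∈ s, a < T) :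
    s.max < (T : WithBot α) := by
  rcases hbot : s.max with _ | A
  · exact WithBot.bot_lt_coe T
  · exact WithBot.coe_lt_coe.2 (h A (Finset.mem_of_max hbot))

theorem gmax_mem {s : Finset α} {M : α} (h : s.max = (M : WithBot α)) : M ∈ s :=
  Finset.mem_of_max h

theorem gmax_le_mem {s : Finset α} {M a : α} (h : s.max = (M : WithBot α)) (ha : a ∈ s) :
    a ≤ M :=
  WithBot.coe_le_coe.1 (h ▸ Finset.le_max ha)

end Generic

variable {K : Type*} [Field K] {n m : ℕ}

/-! ### Polynomial-side lemmas -/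

theorem lppW_eq_bot_iff (o1 : MonOrd n) (f : MvPolynomial (Fin n) K) :
    lppW o1 f = ⊥ ↔ f = 0 := by
  rw [lppW, @Finset.max_eq_bot _ o1.ord, MvPolynomial.support_eq_empty]

theorem lppW_eq_of (o1 : MonOrd n) {f : MvPolynomial (Fin n) K} {M : PP n}
    (h1 : f.coeff M ≠ 0) (h2 : ∀ a, f.coeff a ≠ 0 → o1.ord.le a M) :
    lppW o1 f = (M : WithBot (PP n)) :=
  @gmax_eq_coe_of _ o1.ord _ _ (MvPolynomial.mem_support_iff.2 h1)
    (fun a ha => h2 a (MvPolynomial.mem_support_iff.1 ha))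

theorem lpp_eq_of_lppW (o1 : MonOrd n) {f : MvPolynomial (Fin n) K} {M : PP n}
    (h : lppW o1 f = (M : WithBot (PP n))) : lpp o1 f = M := by
  rw [lpp, h]; rfl

theorem lppW_eq_coe (o1 : MonOrd n) {f : MvPolynomial (Fin n) K} (hf : f ≠ 0) :
    lppW o1 f = ((lpp o1 f : PP n) : WithBot (PP n)) := by
  have h : lppW o1 f ≠ ⊥ := fun h => hf ((lppW_eq_bot_iff o1 f).1 h)
  rcases WithBot.ne_bot_iff_exists.1 h with ⟨M, hM⟩
  rw [← hM, lpp, ← hM]; rfl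

theorem coeff_lpp_ne_zero (o1 : MonOrd n) {f : MvPolynomial (Fin n) K} (hf : f ≠ 0) :
    f.coeff (lpp o1 f) ≠ 0 :=
  MvPolynomial.mem_support_iff.1 (@gmax_mem _ o1.ord _ _ (lppW_eq_coe o1 hf))

theorem coeff_le_lpp (o1 : MonOrd n) {f : MvPolynomial (Fin n) K} {a : PP n}
    (ha : f.coeff a ≠ 0) : o1.ord.le a (lpp o1 f) := by
  have hf : f ≠ 0 := fun h => ha (by simp [h])
  exact @gmax_le_mem _ o1.ord _ _ _ (lppW_eq_coe o1 hf) (MvPolynomial.mem_support_iff.2 ha)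

/-! ### Module-side lemmas -/

theorem mem_msupport {u : ModElem K n m} {T : MTerm n m} :
    T ∈ msupport u ↔ mcoeff u T ≠ 0 := by
  unfold msupport mcoeff
  simp only [Finset.mem_biUnion, Finset.mem_univ, true_and, Finset.mem_image,
    MvPolynomial.mem_support_iff]
  constructor
  · rintro ⟨i, α, hα, rfl⟩; exact hα
  · intro h; exact ⟨T.2, T.1, h, rfl⟩

theorem lppMW_eq_bot_iff (o2 : ModOrd n m) (u : ModElem K n m) :
    lppMW o2 u = ⊥ ↔ u = 0 := by
  rw [lppMW, @Finset.max_eq_bot _ o2.ord]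
  constructor
  · intro h
    funext k
    ext a
    by_contra ha
    have : ((a, k) : MTerm n m) ∈ msupport u := mem_msupport.2 (by exact ha)
    rw [h] at this; exact absurd this (Finset.notMem_empty _)
  · intro h
    rw [Finset.eq_empty_iff_forall_notMem]
    intro T hT
    exact (mem_msupport.1 hT) (by simp [h, mcoeff])

theorem lppMW_eq_of (o2 : ModOrd n m) {u : ModElem K n m} {T : MTerm n m}
    (h1 : mcoeff u T ≠ 0) (h2 : ∀ A, mcoeff u A ≠ 0 → o2.ord.le A T) :
    lppMW o2 u = (T : WithBot (MTerm n m)) :=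
  @gmax_eq_coe_of _ o2.ord _ _ (mem_msupport.2 h1) (fun A hA => h2 A (mem_msupport.1 hA))

theorem mcoeff_lppMW_ne_zero (o2 : ModOrd n m) {u : ModElem K n m} {T : MTerm n m}
    (h : lppMW o2 u = (T : WithBot (MTerm n m))) : mcoeff u T ≠ 0 :=
  mem_msupport.1 (@gmax_mem _ o2.ord _ _ h)

theorem mcoeff_le_lppMW (o2 : ModOrd n m) {u : ModElem K n m} {T A : MTerm n m}
    (h : lppMW o2 u = (T : WithBot (MTerm n m))) (hA : mcoeff u A ≠ 0) :
    o2.ord.le A T :=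
  @gmax_le_mem _ o2.ord _ _ _ h (mem_msupport.2 hA)

theorem lppMW_lt_of (o2 : ModOrd n m) {u : ModElem K n m} {T : MTerm n m}
    (h : ∀ A, mcoeff u A ≠ 0 → o2.ord.lt A T) :
    wbltM o2 (lppMW o2 u) (T : WithBot (MTerm n m)) :=
  @gmax_lt_coe_of _ o2.ord _ _ (fun A hA => h A (mem_msupport.1 hA))

theorem wbleM_coe (o2 : ModOrd n m) {a b : MTerm n m} (h : o2.ord.le a b) :
    wbleM o2 (a : WithBot (MTerm n m)) (b : WithBot (MTerm n m)) :=
  (@WithBot.coe_le_coe _ _ _ o2.ord.toLE).2 h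

theorem wbltM_coe_iff (o2 : ModOrd n m) {a b : MTerm n m} :
    wbltM o2 (a : WithBot (MTerm n m)) (b : WithBot (MTerm n m)) ↔ o2.ord.lt a b :=
  @WithBot.coe_lt_coe _ _ _ o2.ord.toLT

/-! ### mtmul monotonicity -/

theorem mtmul_le_mtmul (o2 : ModOrd n m) {A B : MTerm n m} (t : PP n)
    (h : o2.ord.le A B) : o2.ord.le (mtmul t A) (mtmul t B) := by
  rcases (@lt_or_eq_of_le _ o2.ord.toPartialOrder _ _ h) with h' | h'
  · exact @le_of_lt _ o2.ord.toPreorder _ _ (o2.mul_lt t A B h')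
  · exact @le_of_eq _ o2.ord.toPreorder _ _ (by rw [h'])

theorem mtmul_lt_cancel (o2 : ModOrd n m) {A B : MTerm n m} {t : PP n}
    (h : o2.ord.lt (mtmul t A) (mtmul t B)) : o2.ord.lt A B := by
  rcases @lt_trichotomy _ o2.ord A B with h' | h' | h'
  · exact h'
  · exact absurd h (by rw [h']; exact @lt_irrefl _ o2.ord.toPreorder _)
  · exact absurd (o2.mul_lt t B A h') (@lt_asymm _ o2.ord.toPreorder _ _ h)

end Infra
noncomputable section Infra2
open MvPolynomial
variable {K : Type*} [Field K] {n m : ℕ}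

theorem pp_arith_test (a b : PP n) (h : a ≤ b) : b - a + a = b := tsub_add_cancel_of_le h
theorem pp_arith_test2 (a b : PP n) : a + b - b = a := add_tsub_cancel_right a b

theorem mcoeff_smulPP (t : PP n) (u : ModElem K n m) (A : MTerm n m) :
    mcoeff (smulPP t u) (mtmul t A) = mcoeff u A := by
  show MvPolynomial.coeff (t + A.1) (monomial t (1 : K) * u A.2) = _
  rw [MvPolynomial.coeff_monomial_mul, one_mul]
  rfl

theorem mcoeff_smulPP_ne {t : PP n} {u : ModElem K n m} {B : MTerm n m}
    (h : mcoeff (smulPP t u) B ≠ 0) : ∃ A, B = mtmul t A ∧ mcoeff u A ≠ 0 := by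
  unfold mcoeff smulPP at h
  rw [MvPolynomial.coeff_monomial_mul'] at h
  split_ifs at h with ht
  · refine ⟨(B.1 - t, B.2), ?_, ?_⟩
    · show B = (t + (B.1 - t), B.2)
      rw [add_tsub_cancel_of_le ht]
    · rw [one_mul] at h; exact h
  · exact absurd rfl h

theorem lppMW_smulPP (o2 : ModOrd n m) {u : ModElem K n m} {T : MTerm n m}
    (h : lppMW o2 u = (T : WithBot (MTerm n m))) (t : PP n) :
    lppMW o2 (smulPP t u) = ((mtmul t T : MTerm n m) : WithBot (MTerm n m)) := by
  refine lppMW_eq_of o2 ?_ ?_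
  · rw [mcoeff_smulPP]; exact mcoeff_lppMW_ne_zero o2 h
  · intro A hA
    obtain ⟨A0, rfl, hA0⟩ := mcoeff_smulPP_ne hA
    exact mtmul_le_mtmul o2 t (mcoeff_le_lppMW o2 h hA0)

/-- `u - c·w` for module elements. -/
def subC (c : K) (u w : ModElem K n m) : ModElem K n m := fun k => u k - C c * w k

theorem mcoeff_subC (c : K) (u w : ModElem K n m) (A : MTerm n m) :
    mcoeff (subC c u w) A = mcoeff u A - c * mcoeff w A := by
  unfold subC mcoeff
  rw [MvPolynomial.coeff_sub, MvPolynomial.coeff_C_mul]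

theorem dotF_subC (c : K) (u w : ModElem K n m) (F : Fin m → MvPolynomial (Fin n) K) :
    dotF (subC c u w) F = dotF u F - C c * dotF w F := by
  unfold subC dotF
  rw [Finset.mul_sum, ← Finset.sum_sub_distrib]
  exact Finset.sum_congr rfl fun i _ => by ring

theorem dotF_smulPP (t : PP n) (v : ModElem K n m) (F : Fin m → MvPolynomial (Fin n) K) :
    dotF (smulPP t v) F = monomial t (1 : K) * dotF v F := by
  unfold smulPP dotF
  rw [Finset.mul_sum]
  exact Finset.sum_congr rfl fun i _ => (mul_assoc _ _ _)

theorem dotF_eVec (j : Fin m) (F : Fin m → MvPolynomial (Fin n) K) :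
    dotF (eVec j : ModElem K n m) F = F j := by
  unfold dotF eVec
  simp [ite_mul]

theorem cancel_lt (o2 : ModOrd n m) {u w : ModElem K n m} {T : MTerm n m}
    (hu : lppMW o2 u = (T : WithBot (MTerm n m)))
    (hw : lppMW o2 w = (T : WithBot (MTerm n m))) :
    wbltM o2 (lppMW o2 (subC (mcoeff u T / mcoeff w T) u w)) (T : WithBot (MTerm n m)) := by
  have hwT : mcoeff w T ≠ 0 := mcoeff_lppMW_ne_zero o2 hw
  apply lppMW_lt_of
  intro A hA
  rw [mcoeff_subC] at hA
  have hAne : A ≠ T := by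
    rintro rfl
    exact hA (by rw [div_mul_cancel₀ _ hwT, sub_self])
  have hle : o2.ord.le A T := by
    by_cases h1 : mcoeff u A = 0
    · have h2 : mcoeff w A ≠ 0 := by
        intro h2; apply hA; rw [h1, h2, mul_zero, sub_zero]
      exact mcoeff_le_lppMW o2 hw h2
    · exact mcoeff_le_lppMW o2 hu h1
  exact @lt_of_le_of_ne _ o2.ord.toPartialOrder _ _ hle hAne

/-- maximal element of a finite nonempty subset w.r.t. a strict total order -/
theorem exists_later_max {X : Type*} {Sset : Set X} {later : X → X → Prop}
    (hsto : StrictTotalOn Sset later) {A : Set X} (hAS : A ⊆ Sset) (hfinA : A.Finite)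
    (hne : A.Nonempty) : ∃ p ∈ A, ∀ q ∈ A, ¬ later q p := by
  classical
  obtain ⟨irr, htrans, tot⟩ := hsto
  suffices h : ∀ l : Finset X, ↑l ⊆ Sset → l.Nonempty → ∃ p ∈ l, ∀ q ∈ l, q ≠ p → later p q by
    obtain ⟨p, hp, hmax⟩ := h hfinA.toFinset (by simpa using hAS)
      (by simpa [Set.Finite.toFinset] using hne)
    rw [Set.Finite.mem_toFinset] at hp
    refine ⟨p, hp, fun q hq hqp => ?_⟩
    by_cases hqpeq : q = p
    · exact irr p (hAS hp) (hqpeq ▸ hqp)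
    · have h1 := hmax q (hfinA.mem_toFinset.2 hq) hqpeq
      exact irr q (hAS hq) (htrans q (hAS hq) p (hAS hp) q (hAS hq) hqp h1)
  intro l
  induction l using Finset.induction_on with
  | empty => intro _ h; exact absurd h (by simp)
  | @insert a s ha ih =>
    intro hsub _
    have hsubS : ↑s ⊆ Sset := fun x hx => hsub (by simp [hx])
    have haS : a ∈ Sset := hsub (by simp)
    by_cases hsne : s.Nonempty
    · obtain ⟨p, hp, hmax⟩ := ih hsubS hsne
      have hpS : p ∈ Sset := hsubS hp
      by_cases hap : a = p
      · refine ⟨p, by simp [hp], fun q hq hqp => ?_⟩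
        rcases Finset.mem_insert.1 hq with rfl | hq'
        · exact absurd hap hqp
        · exact hmax q hq' hqp
      · rcases tot a haS p hpS hap with h1 | h1
        · refine ⟨a, by simp, fun q hq hqa => ?_⟩
          rcases Finset.mem_insert.1 hq with rfl | hq'
          · exact absurd rfl hqa
          · by_cases hqp : q = p
            · exact hqp ▸ h1
            · exact htrans a haS p hpS q (hsubS hq') h1 (hmax q hq' hqp)
        · refine ⟨p, by simp [hp], fun q hq hqp => ?_⟩
          rcases Finset.mem_insert.1 hq with rfl | hq'
          · exact h1
          · exact hmax q hq' hqp
    · rw [Finset.not_nonempty_iff_eq_empty] at hsne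
      subst hsne
      exact ⟨a, by simp, fun q hq hqa => by simp at hq; exact absurd hq hqa⟩

end Infra2
noncomputable section Infra3
open MvPolynomial
variable {K : Type*} [Field K] {n m : ℕ}

theorem dotF_zero (F : Fin m → MvPolynomial (Fin n) K) : dotF (0 : ModElem K n m) F = 0 := by
  unfold dotF; simp

theorem dotF_mulsub (a b : MvPolynomial (Fin n) K) (v w : ModElem K n m)
    (F : Fin m → MvPolynomial (Fin n) K) :
    dotF (fun k => a * v k - b * w k) F = a * dotF v F - b * dotF w F := by
  unfold dotF
  rw [Finset.mul_sum, Finset.mul_sum, ← Finset.sum_sub_distrib]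
  exact Finset.sum_congr rfl fun i _ => by ring

theorem pp_add_le (o1 : MonOrd n) (t : PP n) {a b : PP n} (h : o1.ord.le a b) :
    o1.ord.le (t + a) (t + b) := by
  rcases (@lt_or_eq_of_le _ o1.ord.toPartialOrder _ _ h) with h' | h'
  · exact @le_of_lt _ o1.ord.toPreorder _ _ (o1.mul_lt t a b h')
  · exact @le_of_eq _ o1.ord.toPreorder _ _ (by rw [h'])

theorem lppW_monomial_mul (o1 : MonOrd n) (t : PP n) {p : MvPolynomial (Fin n) K}
    (hp : p ≠ 0) :
    lppW o1 (monomial t (1 : K) * p) = ((t + lpp o1 p : PP n) : WithBot (PP n)) := by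
  refine lppW_eq_of o1 ?_ ?_
  · rw [MvPolynomial.coeff_monomial_mul, one_mul]
    exact coeff_lpp_ne_zero o1 hp
  · intro a ha
    rw [MvPolynomial.coeff_monomial_mul'] at ha
    split_ifs at ha with ht
    · rw [one_mul] at ha
      have := pp_add_le o1 t (coeff_le_lpp o1 ha)
      rwa [add_tsub_cancel_of_le ht] at this
    · exact absurd rfl ha

theorem coeff_eq_zero_of_lpp_lt (o1 : MonOrd n) {g : MvPolynomial (Fin n) K} {a : PP n}
    (h : o1.ord.lt (lpp o1 g) a) : g.coeff a = 0 := by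
  by_contra hc
  exact @lt_irrefl _ o1.ord.toPreorder _
    (@lt_of_le_of_lt _ o1.ord.toPreorder _ _ _ (coeff_le_lpp o1 hc) h)

theorem mtmul_mtmul (d e : PP n) (A : MTerm n m) :
    mtmul d (mtmul e A) = mtmul (d + e) A := by
  show (d + (e + A.1), A.2) = (d + e + A.1, A.2)
  rw [add_assoc]

theorem pot_lt_index {o1 : MonOrd n} {o2 : ModOrd n m} (hpot : IsPOT o1 o2)
    {a b : PP n} {k j : Fin m} (h : j < k) :
    o2.ord.lt ((a, k) : MTerm n m) ((b, j) : MTerm n m) :=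
  (hpot _ _).2 (Or.inl h)

theorem pot_le_same_index {o1 : MonOrd n} {o2 : ModOrd n m} (hpot : IsPOT o1 o2)
    {a b : PP n} {k : Fin m} (h : o1.ord.le a b) :
    o2.ord.le ((a, k) : MTerm n m) ((b, k) : MTerm n m) := by
  rcases (@lt_or_eq_of_le _ o1.ord.toPartialOrder _ _ h) with h' | h'
  · exact @le_of_lt _ o2.ord.toPreorder _ _ ((hpot _ _).2 (Or.inr ⟨rfl, h'⟩))
  · exact @le_of_eq _ o2.ord.toPreorder _ _ (by rw [h'])

theorem pot_index_le {o1 : MonOrd n} {o2 : ModOrd n m} (hpot : IsPOT o1 o2)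
    {A B : MTerm n m} (h : o2.ord.le A B) : B.2 ≤ A.2 := by
  rcases (@lt_or_eq_of_le _ o2.ord.toPartialOrder _ _ h) with h' | h'
  · rcases (hpot _ _).1 h' with h'' | ⟨h'', -⟩
    · exact le_of_lt h''
    · exact le_of_eq h''.symm
  · exact le_of_eq (by rw [h'])

theorem F5DivS_mono (o1 : MonOrd n) (o2 : ModOrd n m)
    (S : Set (MvPolynomial (Fin n) K × MTerm n m)) {t1 t2 : PP n} (h : t1 ≤ t2)
    {p : MvPolynomial (Fin n) K × MTerm n m} (hd : F5DivS o1 o2 S t1 p) :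
    F5DivS o1 o2 S t2 p := by
  obtain ⟨q, hq, h0, hle, hlt⟩ := hd
  exact ⟨q, hq, h0, le_trans hle (add_le_add_left h _), hlt⟩

theorem F5RewS_mono
    (later : (MvPolynomial (Fin n) K × MTerm n m) →
      (MvPolynomial (Fin n) K × MTerm n m) → Prop)
    (S : Set (MvPolynomial (Fin n) K × MTerm n m)) {t1 t2 : PP n} (h : t1 ≤ t2)
    {p : MvPolynomial (Fin n) K × MTerm n m} (hr : F5RewS later S t1 p) :
    F5RewS later S t2 p := by
  obtain ⟨q, hq, h2, hle, hlater⟩ := hr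
  exact ⟨q, hq, h2, le_trans hle (add_le_add_left h _), hlater⟩

/-- nonzero module element has a (coe) leading term -/
theorem exists_lppMW_coe (o2 : ModOrd n m) {u : ModElem K n m} (hu : u ≠ 0) :
    ∃ T : MTerm n m, lppMW o2 u = (T : WithBot (MTerm n m)) := by
  have h : lppMW o2 u ≠ ⊥ := fun h => hu ((lppMW_eq_bot_iff o2 u).1 h)
  rcases WithBot.ne_bot_iff_exists.1 h with ⟨T, hT⟩
  exact ⟨T, hT.symm⟩

end Infra3
noncomputable section KeySec
open MvPolynomial
variable {K : Type*} [Field K] {n m : ℕ}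

theorem key_lemma (o1 : MonOrd n) (o2 : ModOrd n m) (hpot : IsPOT o1 o2)
    (F : Fin m → MvPolynomial (Fin n) K)
    (S : Set (MvPolynomial (Fin n) K × MTerm n m)) (hfin : S.Finite)
    (hadm : ∀ p ∈ S, Admissible o2 F p.1 p.2)
    (later : (MvPolynomial (Fin n) K × MTerm n m) →
      (MvPolynomial (Fin n) K × MTerm n m) → Prop)
    (hsto : StrictTotalOn S later)
    (hFmem : ∀ i : Fin m, (F i, (((0 : PP n), i) : MTerm n m)) ∈ S)
    (hCP : ∀ p ∈ S, ∀ q ∈ S, IsCritPairS o1 o2 later p q →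
      ((F5DivS o1 o2 S (tf o1 p.1 q.1) p ∨ F5DivS o1 o2 S (tf o1 q.1 p.1) q) ∨
       (F5RewS later S (tf o1 p.1 q.1) p ∨ F5RewS later S (tf o1 q.1 p.1) q))) :
    ∀ (T : MTerm n m) (f : MvPolynomial (Fin n) K) (u : ModElem K n m),
      f = dotF u F → f ≠ 0 → lppMW o2 u = (T : WithBot (MTerm n m)) →
      ∃ p ∈ S, p.1 ≠ 0 ∧ lpp o1 p.1 ≤ lpp o1 f ∧
        o2.ord.le (mtmul (lpp o1 f - lpp o1 p.1) p.2) T ∧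
        ¬ F5DivS o1 o2 S (lpp o1 f - lpp o1 p.1) p ∧
        ¬ F5RewS later S (lpp o1 f - lpp o1 p.1) p := by
  intro T0
  refine o2.wf.induction
    (C := fun T => ∀ (f : MvPolynomial (Fin n) K) (u : ModElem K n m),
      f = dotF u F → f ≠ 0 → lppMW o2 u = (T : WithBot (MTerm n m)) →
      ∃ p ∈ S, p.1 ≠ 0 ∧ lpp o1 p.1 ≤ lpp o1 f ∧
        o2.ord.le (mtmul (lpp o1 f - lpp o1 p.1) p.2) T ∧
        ¬ F5DivS o1 o2 S (lpp o1 f - lpp o1 p.1) p ∧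
        ¬ F5RewS later S (lpp o1 f - lpp o1 p.1) p) T0 ?_
  clear T0
  intro T ih f u hf hf0 hu
  obtain ⟨α, i⟩ := T
  -- a syzygy of I with signature exactly (α, i) finishes the proof by induction
  have finish_sz : ∀ w : ModElem K n m, dotF w F = 0 →
      lppMW o2 w = (((α, i) : MTerm n m) : WithBot (MTerm n m)) →
      ∃ p ∈ S, p.1 ≠ 0 ∧ lpp o1 p.1 ≤ lpp o1 f ∧
        o2.ord.le (mtmul (lpp o1 f - lpp o1 p.1) p.2) ((α, i) : MTerm n m) ∧
        ¬ F5DivS o1 o2 S (lpp o1 f - lpp o1 p.1) p ∧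
        ¬ F5RewS later S (lpp o1 f - lpp o1 p.1) p := by
    intro w hwF hwsig
    set c := mcoeff u ((α, i) : MTerm n m) / mcoeff w ((α, i) : MTerm n m) with hc
    have hu'F : dotF (subC c u w) F = f := by
      rw [dotF_subC, hwF, mul_zero, sub_zero, hf]
    have hlt := cancel_lt o2 hu hwsig
    have hu'ne : subC c u w ≠ 0 := by
      intro h0
      rw [h0, dotF_zero] at hu'F
      exact hf0 hu'F.symm
    obtain ⟨T', hT'⟩ := exists_lppMW_coe o2 hu'ne
    rw [hT'] at hlt
    have hT'lt : o2.ord.lt T' ((α, i) : MTerm n m) := (wbltM_coe_iff o2).1 hlt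
    obtain ⟨p, hpS, hp0, hplpp, hpsig, hpdiv, hprew⟩ :=
      ih T' hT'lt f (subC c u w) hu'F.symm hf0 hT'
    exact ⟨p, hpS, hp0, hplpp,
      @le_trans _ o2.ord.toPreorder _ _ _ hpsig (@le_of_lt _ o2.ord.toPreorder _ _ hT'lt),
      hpdiv, hprew⟩
  -- choose the latest element of S with signature dividing (α, i)
  set P' : Set (MvPolynomial (Fin n) K × MTerm n m) :=
    {p | p ∈ S ∧ p.2.2 = i ∧ p.2.1 ≤ α} with hP'
  have hPne : (F i, (((0 : PP n), i) : MTerm n m)) ∈ P' := ⟨hFmem i, rfl, zero_le⟩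
  obtain ⟨p, hpP, hpmax⟩ := exists_later_max hsto (fun p hp => hp.1)
    (hfin.subset (fun p hp => hp.1)) ⟨_, hPne⟩
  obtain ⟨hpS, hpi, hple⟩ := hpP
  set t : PP n := α - p.2.1 with ht
  have htp : mtmul t p.2 = ((α, i) : MTerm n m) := by
    show (t + p.2.1, p.2.2) = ((α, i) : MTerm n m)
    rw [ht, tsub_add_cancel_of_le hple, hpi]
  have htp1 : t + p.2.1 = α := congrArg Prod.fst htp
  obtain ⟨vp, hvp1, hvp2⟩ := hadm p hpS
  -- Case: p is a syzygy element
  by_cases hp0 : p.1 = 0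
  · refine finish_sz (smulPP t vp) ?_ ?_
    · rw [dotF_smulPP, ← hvp1, hp0, mul_zero]
    · rw [lppMW_smulPP o2 hvp2 t, htp]
  -- Case: t·p is F5-divisible: Koszul syzygy
  by_cases hdiv : F5DivS o1 o2 S t p
  · obtain ⟨q, hqS, hq0, hqlpp, hqlt⟩ := hdiv
    rw [htp1] at hqlpp
    have hij : i < q.2.2 := by
      rcases (hpot _ _).1 hqlt with h | ⟨-, h⟩
      · rwa [hpi] at h
      · exact absurd h (@lt_irrefl _ o1.ord.toPreorder _)
    obtain ⟨vq, hvq1, hvq2⟩ := hadm q hqS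
    have hvqz : ∀ k : Fin m, k < q.2.2 → vq k = 0 := by
      intro k hk
      by_contra hvk
      obtain ⟨a, ha⟩ := MvPolynomial.ne_zero_iff.1 hvk
      have h1 : mcoeff vq ((a, k) : MTerm n m) ≠ 0 := ha
      have h2 := mcoeff_le_lppMW o2 hvq2 h1
      have := pot_index_le hpot h2
      exact absurd (lt_of_lt_of_le hk this) (lt_irrefl k)
    set z : ModElem K n m := fun k => q.1 * eVec i k - F i * vq k with hz
    have hzF : dotF z F = 0 := by
      rw [hz, dotF_mulsub, dotF_eVec, ← hvq1, mul_comm, sub_self]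
    have hzi : z i = q.1 := by
      rw [hz]
      show q.1 * eVec i i - F i * vq i = q.1
      rw [hvqz i hij]
      simp [eVec]
    have hzsig : lppMW o2 z = (((lpp o1 q.1, i) : MTerm n m) : WithBot (MTerm n m)) := by
      refine lppMW_eq_of o2 ?_ ?_
      · show (z i).coeff (lpp o1 q.1) ≠ 0
        rw [hzi]
        exact coeff_lpp_ne_zero o1 hq0
      · rintro ⟨d, k⟩ hA
        by_cases hk : k = i
        · subst hk
          have : (z k).coeff d ≠ 0 := hA
          rw [hzi] at this
          exact pot_le_same_index hpot (coeff_le_lpp o1 this)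
        · have hzk : z k = -(F i * vq k) := by
            rw [hz]
            show q.1 * eVec i k - F i * vq k = _
            simp [eVec, hk]
          have : (z k).coeff d ≠ 0 := hA
          rw [hzk] at this
          have hvk : vq k ≠ 0 := by
            intro h0; rw [h0, mul_zero, neg_zero] at this; exact this rfl
          have hk2 : q.2.2 ≤ k := le_of_not_gt (fun hlt' => hvk (hvqz k hlt'))
          exact @le_of_lt _ o2.ord.toPreorder _ _
            (pot_lt_index hpot (lt_of_lt_of_le hij hk2))
    refine finish_sz (smulPP (α - lpp o1 q.1) z) ?_ ?_
    · rw [dotF_smulPP, hzF, mul_zero]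
    · rw [lppMW_smulPP o2 hzsig]
      show ((((α - lpp o1 q.1) + lpp o1 q.1, i) : MTerm n m) : WithBot (MTerm n m)) = _
      rw [tsub_add_cancel_of_le hqlpp]
  -- Now t·p is neither divisible nor rewritable
  have hrew : ¬ F5RewS later S t p := by
    rintro ⟨q, hqS, hq22, hqle, hlater⟩
    rw [htp1] at hqle
    exact hpmax q ⟨hqS, hq22.trans hpi, hqle⟩ hlater
  -- main reduction step
  set w : ModElem K n m := smulPP t vp with hw
  have hwsig : lppMW o2 w = (((α, i) : MTerm n m) : WithBot (MTerm n m)) := by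
    rw [hw, lppMW_smulPP o2 hvp2 t, htp]
  set c := mcoeff u ((α, i) : MTerm n m) / mcoeff w ((α, i) : MTerm n m) with hc
  set g0 : MvPolynomial (Fin n) K := monomial t (1 : K) * p.1 with hg0
  have hu'F : dotF (subC c u w) F = f - C c * g0 := by
    rw [dotF_subC, hw, dotF_smulPP, ← hvp1, ← hf, hg0]
  have hlt := cancel_lt o2 hu hwsig
  have hg0lpp : lppW o1 g0 = ((t + lpp o1 p.1 : PP n) : WithBot (PP n)) :=
    lppW_monomial_mul o1 t hp0
  set Mp : PP n := t + lpp o1 p.1 with hMp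
  have hg0lp : lpp o1 g0 = Mp := lpp_eq_of_lppW o1 hg0lpp
  rcases @lt_trichotomy _ o1.ord (lpp o1 f) Mp with hcmp | hcmp | hcmp
  · -- hard case : lpp f ≺ Mp, leading terms cancel; use a critical pair
    have hcne : c ≠ 0 :=
      div_ne_zero (mcoeff_lppMW_ne_zero o2 hu) (mcoeff_lppMW_ne_zero o2 hwsig)
    have hchM : (f - C c * g0).coeff Mp ≠ 0 := by
      rw [MvPolynomial.coeff_sub, MvPolynomial.coeff_C_mul,
        coeff_eq_zero_of_lpp_lt o1 hcmp, zero_sub, neg_ne_zero]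
      refine mul_ne_zero hcne ?_
      rw [hg0, hMp, MvPolynomial.coeff_monomial_mul, one_mul]
      exact coeff_lpp_ne_zero o1 hp0
    have hhW : lppW o1 (f - C c * g0) = (Mp : WithBot (PP n)) := by
      refine lppW_eq_of o1 hchM ?_
      intro a ha
      rw [MvPolynomial.coeff_sub, MvPolynomial.coeff_C_mul] at ha
      by_cases h1 : f.coeff a = 0
      · have h2 : g0.coeff a ≠ 0 := fun h2 => ha (by rw [h1, h2, mul_zero, sub_zero])
        have h3 := coeff_le_lpp o1 h2
        rwa [hg0lp] at h3
      · exact @le_trans _ o1.ord.toPreorder _ _ _ (coeff_le_lpp o1 h1)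
          (@le_of_lt _ o1.ord.toPreorder _ _ hcmp)
    have hh0 : (f - C c * g0) ≠ 0 := fun h0 => hchM (by rw [h0, MvPolynomial.coeff_zero])
    have hhlpp : lpp o1 (f - C c * g0) = Mp := lpp_eq_of_lppW o1 hhW
    have hu'ne : subC c u w ≠ 0 := fun h0 => hh0 (by rw [← hu'F, h0, dotF_zero])
    obtain ⟨T', hT'⟩ := exists_lppMW_coe o2 hu'ne
    rw [hT'] at hlt
    have hT'lt : o2.ord.lt T' ((α, i) : MTerm n m) := (wbltM_coe_iff o2).1 hlt
    obtain ⟨g, hgS, hgne, hglpp, hgsig, hgdiv, hgrew⟩ :=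
      ih T' hT'lt (f - C c * g0) (subC c u w) hu'F.symm hh0 hT'
    rw [hhlpp] at hglpp hgsig hgdiv hgrew
    set L : PP n := lpp o1 p.1 ⊔ lpp o1 g.1 with hL
    have hpleM : lpp o1 p.1 ≤ Mp := hMp ▸ le_add_self
    have hLM : L ≤ Mp := sup_le hpleM hglpp
    have htfp : tf o1 p.1 g.1 = L - lpp o1 p.1 := rfl
    have htfg : tf o1 g.1 p.1 = L - lpp o1 g.1 := by
      show (lpp o1 g.1 ⊔ lpp o1 p.1) - lpp o1 g.1 = L - lpp o1 g.1
      rw [sup_comm (lpp o1 g.1), ← hL]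
    have hMpt : Mp - lpp o1 p.1 = t := by rw [hMp]; exact add_tsub_cancel_right _ _
    have htd : t = (Mp - L) + (L - lpp o1 p.1) := by
      rw [← hMpt, tsub_add_tsub_cancel hLM le_sup_left]
    have htgd : Mp - lpp o1 g.1 = (Mp - L) + (L - lpp o1 g.1) :=
      (tsub_add_tsub_cancel hLM le_sup_right).symm
    have hTgT : o2.ord.lt (mtmul (Mp - lpp o1 g.1) g.2) ((α, i) : MTerm n m) :=
      @lt_of_le_of_lt _ o2.ord.toPreorder _ _ _ hgsig hT'lt
    have hkey : o2.ord.lt (mtmul (tf o1 g.1 p.1) g.2) (mtmul (tf o1 p.1 g.1) p.2) := by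
      refine mtmul_lt_cancel o2 (t := Mp - L) ?_
      have e1 : mtmul (Mp - L) (mtmul (tf o1 p.1 g.1) p.2) = mtmul t p.2 := by
        rw [mtmul_mtmul, htfp, ← htd]
      have e2 : mtmul (Mp - L) (mtmul (tf o1 g.1 p.1) g.2) = mtmul (Mp - lpp o1 g.1) g.2 := by
        rw [mtmul_mtmul, htfg, ← htgd]
      rw [e1, e2, htp]
      exact hTgT
    have hcrit : IsCritPairS o1 o2 later p g := ⟨hp0, hgne, Or.inl hkey⟩
    have htfp_le : tf o1 p.1 g.1 ≤ t := by rw [htfp, htd]; exact le_add_self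
    have htfg_le : tf o1 g.1 p.1 ≤ Mp - lpp o1 g.1 := by rw [htfg, htgd]; exact le_add_self
    rcases hCP p hpS g hgS hcrit with (hd | hd) | (hr | hr)
    · exact absurd (F5DivS_mono o1 o2 S htfp_le hd) hdiv
    · exact absurd (F5DivS_mono o1 o2 S htfg_le hd) hgdiv
    · exact absurd (F5RewS_mono later S htfp_le hr) hrew
    · exact absurd (F5RewS_mono later S htfg_le hr) hgrew
  · -- case : lpp f = Mp, p itself works
    have hmul : lpp o1 f - lpp o1 p.1 = t := by
      rw [hcmp, hMp]; exact add_tsub_cancel_right _ _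
    refine ⟨p, hpS, hp0, ?_, ?_, ?_, ?_⟩
    · rw [hcmp, hMp]; exact le_add_self
    · rw [hmul, htp]; exact @le_refl _ o2.ord.toPreorder _
    · rw [hmul]; exact hdiv
    · rw [hmul]; exact hrew
  · -- case : Mp ≺ lpp f, leading term survives
    have hgf : o1.ord.lt (lpp o1 g0) (lpp o1 f) := by rw [hg0lp]; exact hcmp
    have hchf : (f - C c * g0).coeff (lpp o1 f) ≠ 0 := by
      rw [MvPolynomial.coeff_sub, MvPolynomial.coeff_C_mul,
        coeff_eq_zero_of_lpp_lt o1 hgf, mul_zero, sub_zero]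
      exact coeff_lpp_ne_zero o1 hf0
    have hhW : lppW o1 (f - C c * g0) = ((lpp o1 f : PP n) : WithBot (PP n)) := by
      refine lppW_eq_of o1 hchf ?_
      intro a ha
      rw [MvPolynomial.coeff_sub, MvPolynomial.coeff_C_mul] at ha
      by_cases h1 : f.coeff a = 0
      · have h2 : g0.coeff a ≠ 0 := fun h2 => ha (by rw [h1, h2, mul_zero, sub_zero])
        have h3 := coeff_le_lpp o1 h2
        rw [hg0lp] at h3
        exact @le_trans _ o1.ord.toPreorder _ _ _ h3 (@le_of_lt _ o1.ord.toPreorder _ _ hcmp)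
      · exact coeff_le_lpp o1 h1
    have hh0 : (f - C c * g0) ≠ 0 := fun h0 => hchf (by rw [h0, MvPolynomial.coeff_zero])
    have hhlpp : lpp o1 (f - C c * g0) = lpp o1 f := lpp_eq_of_lppW o1 hhW
    have hu'ne : subC c u w ≠ 0 := fun h0 => hh0 (by rw [← hu'F, h0, dotF_zero])
    obtain ⟨T', hT'⟩ := exists_lppMW_coe o2 hu'ne
    rw [hT'] at hlt
    have hT'lt : o2.ord.lt T' ((α, i) : MTerm n m) := (wbltM_coe_iff o2).1 hlt
    obtain ⟨g, hgS, hgne, hglpp, hgsig, hgdiv, hgrew⟩ :=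
      ih T' hT'lt (f - C c * g0) (subC c u w) hu'F.symm hh0 hT'
    rw [hhlpp] at hglpp hgsig hgdiv hgrew
    exact ⟨g, hgS, hgne, hglpp,
      @le_trans _ o2.ord.toPreorder _ _ _ hgsig (@le_of_lt _ o2.ord.toPreorder _ _ hT'lt),
      hgdiv, hgrew⟩

end KeySec
/-- (F5 computes a signature-labeled Gröbner basis.) Let `≺₂` be the
position-over-term extension of `≺₁`, and `S` a finite set of admissible labeled polynomials
with a strict total order `later`. If (1) each `fᵢ^(eᵢ)` belongs to `S` and every other element
of `S` was added later than each `fᵢ^(eᵢ)`, and (2) every critical pair of `S` is F5-divisible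
or F5-rewritable by `S`, then `S` is a signature-labeled Gröbner basis for `I`. -/
theorem detachability_stmt9 {K : Type*} [Field K] {n m : ℕ}
    (o1 : MonOrd n) (o2 : ModOrd n m) (hpot : IsPOT o1 o2)
    (F : Fin m → MvPolynomial (Fin n) K)
    (S : Set (MvPolynomial (Fin n) K × MTerm n m)) (hfin : S.Finite)
    (hadm : ∀ p ∈ S, Admissible o2 F p.1 p.2)
    (later : (MvPolynomial (Fin n) K × MTerm n m) →
      (MvPolynomial (Fin n) K × MTerm n m) → Prop)
    (hsto : StrictTotalOn S later)
    (hFmem : ∀ i : Fin m, (F i, (((0 : PP n), i) : MTerm n m)) ∈ S)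
    (hFfirst : ∀ p ∈ S, (∀ i : Fin m, p ≠ (F i, (((0 : PP n), i) : MTerm n m))) →
      ∀ i : Fin m, later p (F i, (((0 : PP n), i) : MTerm n m)))
    (hCP : ∀ p ∈ S, ∀ q ∈ S, IsCritPairS o1 o2 later p q →
      ((F5DivS o1 o2 S (tf o1 p.1 q.1) p ∨ F5DivS o1 o2 S (tf o1 q.1 p.1) q) ∨
       (F5RewS later S (tf o1 p.1 q.1) p ∨ F5RewS later S (tf o1 q.1 p.1) q))) :
    IsSigLGBSet o1 o2 F S := by
  classical
  have key := key_lemma o1 o2 hpot F S hfin hadm later hsto hFmem hCP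
  have hadm' : ∀ p, p ∈ S → ∃ u : ModElem K n m,
      p.1 = dotF u F ∧ lppMW o2 u = (p.2 : WithBot (MTerm n m)) := fun p hp => hadm p hp
  choose V0 hV0 using hadm'
  refine ⟨hfin, fun p => if hp : p ∈ S then V0 p hp else 0, ?_, ?_, ?_⟩
  · intro p hp
    show lppMW o2 (if h : p ∈ S then V0 p h else 0) = (p.2 : WithBot (MTerm n m))
    rw [dif_pos hp]
    exact (hV0 p hp).2
  · rintro _ ⟨p, hp, rfl⟩
    show p.1 = dotF (if h : p ∈ S then V0 p h else 0) F
    rw [dif_pos hp]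
    exact (hV0 p hp).1
  · intro f u hf hf0
    have hune : u ≠ 0 := by
      rintro rfl
      exact hf0 (hf.trans (dotF_zero F))
    obtain ⟨T, hT⟩ := exists_lppMW_coe o2 hune
    obtain ⟨p, hpS, hp0, hplpp, hpsig, -, -⟩ := key T f u hf hf0 hT
    refine ⟨(p.1, if h : p ∈ S then V0 p h else 0), ⟨p, hpS, rfl⟩, hp0, hplpp, ?_⟩
    show wbleM o2 (lppMW o2 (smulPP (lpp o1 f - lpp o1 p.1)
      (if h : p ∈ S then V0 p h else 0))) (lppMW o2 u)
    rw [dif_pos hpS, lppMW_smulPP o2 (hV0 p hpS).2, hT]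
    exact wbleM_coe o2 hpsig
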